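/- Vanishing of the coupling term in the score (U_{2_1,n} → 0). In the two-stage LAGO setup, define U_{2\_1,n} := (1/√n) Σ_{j≤J₂} Σ_{i≤n_j^{(2)}(n)} [ h′(⟨β*, X_j^{(2,n)}⟩) X_j^{(2,n)} − h′(⟨β*, x_j^{(2)}⟩) x_j^{(2)} ] ε_{ij}^{(2,n)} ∈ ℝ^d. Then U_{2\_1,n} → 0 in probability as n → ∞. -/

import Mathlib

open MeasureTheory ProbabilityTheory Filter
open scoped RealInnerProductSpace BigOperators NNReal Topology ENNReal

noncomputable section

/-- Concatenate `(1, a, z)` into a design vector in `ℝ^(1+P+Q)`. -/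
def designVec {P Q : ℕ} (a : EuclideanSpace ℝ (Fin P)) (z : EuclideanSpace ℝ (Fin Q)) :
    EuclideanSpace ℝ (Fin (1 + P + Q)) :=
  (EuclideanSpace.equiv (Fin (1 + P + Q)) ℝ).symm
    (Fin.append (Fin.append ![(1 : ℝ)] ((EuclideanSpace.equiv (Fin P) ℝ) a))
      ((EuclideanSpace.equiv (Fin Q) ℝ) z))

/-- The two-stage LAGO setup. -/
structure LagoSetup (Ω : Type) [MeasurableSpace Ω] (Pr : Measure Ω) (J1 J2 P Q : ℕ) where
  hJ1 : 1 ≤ J1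
  hJ2 : 1 ≤ J2
  hP : 1 ≤ P
  hQ : 1 ≤ Q
  /-- stage-1 interventions -/
  a1 : Fin J1 → EuclideanSpace ℝ (Fin P)
  /-- stage-1 center covariates -/
  z1 : Fin J1 → EuclideanSpace ℝ (Fin Q)
  /-- limit stage-2 interventions -/
  a2 : Fin J2 → EuclideanSpace ℝ (Fin P)
  /-- stage-2 center covariates -/
  z2 : Fin J2 → EuclideanSpace ℝ (Fin Q)
  /-- random stage-2 interventions, for each total sample size `n` -/
  A2 : ℕ → Fin J2 → Ω → EuclideanSpace ℝ (Fin P)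
  measA2 : ∀ n j, Measurable (A2 n j)
  /-- per-center sample sizes, stage 1 -/
  n1 : ℕ → Fin J1 → ℕ
  /-- per-center sample sizes, stage 2 -/
  n2 : ℕ → Fin J2 → ℕ
  sum_sizes : ∀ n, (∑ j, n1 n j) + (∑ j, n2 n j) = n
  α1 : Fin J1 → ℝ
  α2 : Fin J2 → ℝ
  α1_pos : ∀ j, 0 < α1 j
  α2_pos : ∀ j, 0 < α2 j
  α1_lim : ∀ j, Tendsto (fun n : ℕ => (n1 n j : ℝ) / n) atTop (𝓝 (α1 j))
  α2_lim : ∀ j, Tendsto (fun n : ℕ => (n2 n j : ℝ) / n) atTop (𝓝 (α2 j))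
  /-- the mean function (inverse link) -/
  h : ℝ → ℝ
  h_smooth : ContDiff ℝ 2 h
  /-- the (compact) parameter space -/
  B : Set (EuclideanSpace ℝ (Fin (1 + P + Q)))
  B_compact : IsCompact B
  /-- the true parameter -/
  βstar : EuclideanSpace ℝ (Fin (1 + P + Q))
  βstar_mem : βstar ∈ B
  /-- stage-1 errors -/
  ε1 : Fin J1 → ℕ → Ω → ℝ
  /-- realized stage-2 errors -/
  ε2n : ℕ → Fin J2 → ℕ → Ω → ℝ
  /-- coupled i.i.d. stage-2 error arrays -/
  ε2 : Fin J2 → ℕ → Ω → ℝ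
  meas_ε1 : ∀ j i, Measurable (ε1 j i)
  meas_ε2n : ∀ n j i, Measurable (ε2n n j i)
  meas_ε2 : ∀ j i, Measurable (ε2 j i)
  /-- stage-1 error variances σ₁²(j) -/
  var1 : Fin J1 → ℝ
  /-- stage-2 error variances σ₂²(j) -/
  var2 : Fin J2 → ℝ
  /-- Assumption 3: convergence in probability of the stage-2 interventions -/
  A2_tendsto : ∀ j, TendstoInMeasure Pr (fun n => A2 n j) atTop (fun _ => a2 j)
  /-- Assumption 4: all interventions and errors take values in one compact set -/
  bound : ℝ
  A2_bdd : ∀ n j ω, ‖A2 n j ω‖ ≤ bound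
  ε1_bdd : ∀ j i ω, |ε1 j i ω| ≤ bound
  ε2n_bdd : ∀ n j i ω, |ε2n n j i ω| ≤ bound
  ε2_bdd : ∀ j i ω, |ε2 j i ω| ≤ bound
  /-- identical distribution within each error array -/
  ε1_ident : ∀ j i, IdentDistrib (ε1 j i) (ε1 j 0) Pr Pr
  ε2_ident : ∀ j i, IdentDistrib (ε2 j i) (ε2 j 0) Pr Pr
  ε1_mean : ∀ j i, ∫ ω, ε1 j i ω ∂Pr = 0
  ε2_mean : ∀ j i, ∫ ω, ε2 j i ω ∂Pr = 0
  ε1_var : ∀ j i, ∫ ω, (ε1 j i ω) ^ 2 ∂Pr = var1 j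
  ε2_var : ∀ j i, ∫ ω, (ε2 j i ω) ^ 2 ∂Pr = var2 j
  /-- all ε¹ and ε² variables are mutually independent -/
  ε_indep : iIndepFun
      (Sum.elim (fun p : Fin J1 × ℕ => fun ω => ε1 p.1 p.2 ω)
        (fun p : Fin J2 × ℕ => fun ω => ε2 p.1 p.2 ω)) Pr
  /-- the coupled ε² arrays are independent of (ε¹, (A_j^{(2,n)})_{j,n}) -/
  ε2_indep_rest : IndepFun
      (fun ω => (fun p : Fin J2 × ℕ => ε2 p.1 p.2 ω))
      (fun ω => ((fun p : Fin J1 × ℕ => ε1 p.1 p.2 ω),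
        (fun q : ℕ × Fin J2 => A2 q.1 q.2 ω))) Pr
  /-- Assumption 5: joint-law equality between realized and coupled errors -/
  jointLaw : ∀ n,
    Measure.map (fun ω => ((fun p : Fin J1 × ℕ => ε1 p.1 p.2 ω),
        (fun j => A2 n j ω), (fun p : Fin J2 × ℕ => ε2n n p.1 p.2 ω))) Pr
    = Measure.map (fun ω => ((fun p : Fin J1 × ℕ => ε1 p.1 p.2 ω),
        (fun j => A2 n j ω), (fun p : Fin J2 × ℕ => ε2 p.1 p.2 ω))) Pr

namespace LagoSetup

variable {Ω : Type} [MeasurableSpace Ω] {Pr : Measure Ω} {J1 J2 P Q : ℕ}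

/-- stage-1 design vectors x_j^{(1)} = (1, a_j^{(1)}, z_j^{(1)}) -/
def x1v (S : LagoSetup Ω Pr J1 J2 P Q) (j : Fin J1) : EuclideanSpace ℝ (Fin (1 + P + Q)) :=
  designVec (S.a1 j) (S.z1 j)

/-- limit stage-2 design vectors x_j^{(2)} = (1, a_j^{(2)}, z_j^{(2)}) -/
def x2v (S : LagoSetup Ω Pr J1 J2 P Q) (j : Fin J2) : EuclideanSpace ℝ (Fin (1 + P + Q)) :=
  designVec (S.a2 j) (S.z2 j)

/-- random stage-2 design vectors X_j^{(2,n)} = (1, A_j^{(2,n)}, z_j^{(2)}) -/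
def X2v (S : LagoSetup Ω Pr J1 J2 P Q) (n : ℕ) (j : Fin J2) (ω : Ω) :
    EuclideanSpace ℝ (Fin (1 + P + Q)) :=
  designVec (S.A2 n j ω) (S.z2 j)

/-- The LAGO estimating function U_n(β). -/
def U (S : LagoSetup Ω Pr J1 J2 P Q) (n : ℕ) (β : EuclideanSpace ℝ (Fin (1 + P + Q))) (ω : Ω) :
    EuclideanSpace ℝ (Fin (1 + P + Q)) :=
  (n : ℝ)⁻¹ •
    ((∑ j, ∑ i ∈ Finset.range (S.n1 n j),
        (deriv S.h ⟪β, S.x1v j⟫ *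
          (S.h ⟪S.βstar, S.x1v j⟫ + S.ε1 j i ω - S.h ⟪β, S.x1v j⟫)) • S.x1v j) +
      (∑ j, ∑ i ∈ Finset.range (S.n2 n j),
        (deriv S.h ⟪β, S.X2v n j ω⟫ *
          (S.h ⟪S.βstar, S.X2v n j ω⟫ + S.ε2n n j i ω - S.h ⟪β, S.X2v n j ω⟫)) •
          S.X2v n j ω))

/-- The deterministic limit u(β) of the estimating function. -/
def uLim (S : LagoSetup Ω Pr J1 J2 P Q) (β : EuclideanSpace ℝ (Fin (1 + P + Q))) :
    EuclideanSpace ℝ (Fin (1 + P + Q)) :=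
  (∑ j, (S.α1 j * deriv S.h ⟪β, S.x1v j⟫ *
      (S.h ⟪S.βstar, S.x1v j⟫ - S.h ⟪β, S.x1v j⟫)) • S.x1v j) +
    (∑ j, (S.α2 j * deriv S.h ⟪β, S.x2v j⟫ *
      (S.h ⟪S.βstar, S.x2v j⟫ - S.h ⟪β, S.x2v j⟫)) • S.x2v j)

/-- The limiting Jacobian matrix J(β*). -/
def Jmat (S : LagoSetup Ω Pr J1 J2 P Q) : Matrix (Fin (1 + P + Q)) (Fin (1 + P + Q)) ℝ :=
  Matrix.of fun p q =>
    (∑ j, S.α1 j * (deriv S.h ⟪S.βstar, S.x1v j⟫) ^ 2 * (S.x1v j p * S.x1v j q)) +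
      (∑ j, S.α2 j * (deriv S.h ⟪S.βstar, S.x2v j⟫) ^ 2 * (S.x2v j p * S.x2v j q))

/-- The limiting score covariance matrix V(β*). -/
def Vmat (S : LagoSetup Ω Pr J1 J2 P Q) : Matrix (Fin (1 + P + Q)) (Fin (1 + P + Q)) ℝ :=
  Matrix.of fun p q =>
    (∑ j, S.α1 j * S.var1 j * (deriv S.h ⟪S.βstar, S.x1v j⟫) ^ 2 * (S.x1v j p * S.x1v j q)) +
      (∑ j, S.α2 j * S.var2 j * (deriv S.h ⟪S.βstar, S.x2v j⟫) ^ 2 * (S.x2v j p * S.x2v j q))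

end LagoSetup

/-- `μ` is the centered Gaussian law on ℝ^d with covariance matrix `C`
(characterized via all one-dimensional projections, Cramér–Wold). -/
def IsCenteredGaussianLaw {d : ℕ} (μ : Measure (EuclideanSpace ℝ (Fin d)))
    (C : Matrix (Fin d) (Fin d) ℝ) : Prop :=
  IsProbabilityMeasure μ ∧
    ∀ l : EuclideanSpace ℝ (Fin d),
      Measure.map (fun v => ⟪l, v⟫) μ =
        gaussianReal 0 (Real.toNNReal (∑ p, ∑ q, l p * C p q * l q))

/-- Convergence in distribution: weak convergence of the laws. -/
def TendstoInDistribution {Ω : Type} [MeasurableSpace Ω] {E : Type*}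
    [MeasurableSpace E] [TopologicalSpace E]
    (X : ℕ → Ω → E) (Pr : Measure Ω) (μ : Measure E) : Prop :=
  ∀ f : BoundedContinuousFunction E ℝ,
    Tendsto (fun n => ∫ ω, f (X n ω) ∂Pr) atTop (𝓝 (∫ x, f x ∂μ))

/-!
By Assumption 5 the coupling term has the same law as the one built from the coupled i.i.d.
errors `ε²`, and convergence in probability to a constant only depends on the laws. With the
coupled errors the term is `∑ⱼ (n^{-1/2} ∑ᵢ ε²ᵢⱼ) • (gⱼ(Aⱼ⁽²ⁿ⁾) - gⱼ(aⱼ⁽²⁾))`, where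
`gⱼ(a) = h'(⟨β*, x⟩) x` for `x = (1, a, zⱼ⁽²⁾)`. The scalar factor is centred with variance at
most the squared error bound (independent summands, `nⱼ⁽²⁾ ≤ n`), so it is bounded in
probability by Chebyshev; the vector factor tends to `0` in probability by Assumption 3 and the
continuity of `gⱼ`.
-/

namespace MeasureTheory

variable {α ι E : Type*} [MeasurableSpace α] {μ : Measure α} {l : Filter ι}

def BoundedInProbability (μ : Measure α) (f : ι → α → ℝ) (l : Filter ι) : Prop :=
  ∀ δ : ℝ≥0∞, 0 < δ → ∃ M : ℝ, ∀ᶠ i in l, μ {x | M ≤ |f i x|} ≤ δ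

theorem TendstoInMeasure.add [SeminormedAddCommGroup E] {f f' : ι → α → E} {g g' : α → E}
    (hf : TendstoInMeasure μ f l g) (hf' : TendstoInMeasure μ f' l g') :
    TendstoInMeasure μ (fun i x => f i x + f' i x) l (fun x => g x + g' x) := by
  rw [tendstoInMeasure_iff_norm] at *
  intro ε hε
  have hsub : ∀ i, {x | ε ≤ ‖f i x + f' i x - (g x + g' x)‖} ⊆
      {x | ε / 2 ≤ ‖f i x - g x‖} ∪ {x | ε / 2 ≤ ‖f' i x - g' x‖} := by
    intro i x hx
    by_contra hcon
    simp only [Set.mem_union, Set.mem_ofPred_eq, not_or, not_le] at hx hcon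
    rw [add_sub_add_comm] at hx
    linarith [norm_add_le (f i x - g x) (f' i x - g' x)]
  have hsum := (hf (ε / 2) (half_pos hε)).add (hf' (ε / 2) (half_pos hε))
  rw [add_zero] at hsum
  exact tendsto_of_tendsto_of_tendsto_of_le_of_le tendsto_const_nhds hsum
    (fun _ => bot_le) fun i => (measure_mono (hsub i)).trans (measure_union_le _ _)

theorem tendstoInMeasure_finsetSum [SeminormedAddCommGroup E] {κ : Type*} (s : Finset κ)
    {f : κ → ι → α → E} {g : κ → α → E} (hf : ∀ k ∈ s, TendstoInMeasure μ (f k) l (g k)) :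
    TendstoInMeasure μ (fun i x => ∑ k ∈ s, f k i x) l (fun x => ∑ k ∈ s, g k x) := by
  classical
  induction s using Finset.induction_on with
  | empty =>
    rw [tendstoInMeasure_iff_norm]
    intro ε hε
    simpa [not_le.2 hε] using tendsto_const_nhds
  | insert k s hk ih =>
    simp only [Finset.sum_insert hk]
    exact (hf k (Finset.mem_insert_self k s)).add
      (ih fun k' hk' => hf k' (Finset.mem_insert_of_mem hk'))

theorem TendstoInMeasure.comp_continuousAt [PseudoMetricSpace E] {F : Type*}
    [PseudoMetricSpace F] {X : ι → α → E} {c : E} (hX : TendstoInMeasure μ X l fun _ => c)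
    {g : E → F} (hg : ContinuousAt g c) :
    TendstoInMeasure μ (fun i x => g (X i x)) l fun _ => g c := by
  rw [tendstoInMeasure_iff_dist] at *
  intro ε hε
  obtain ⟨δ, hδ, hgδ⟩ := Metric.continuousAt_iff.mp hg ε hε
  have hsub : ∀ i, {x | ε ≤ dist (g (X i x)) (g c)} ⊆ {x | δ ≤ dist (X i x) c} := by
    intro i x hx
    by_contra hcon
    exact (not_le.2 (hgδ (not_le.1 hcon))) hx
  exact tendsto_of_tendsto_of_tendsto_of_le_of_le tendsto_const_nhds (hX δ hδ)
    (fun _ => bot_le) fun i => measure_mono (hsub i)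

theorem TendstoInMeasure.of_identDistrib [PseudoMetricSpace E] [MeasurableSpace E]
    [OpensMeasurableSpace E] {X Y : ι → α → E} {c : E}
    (hXY : ∀ i, IdentDistrib (X i) (Y i) μ μ)
    (hY : TendstoInMeasure μ Y l fun _ => c) :
    TendstoInMeasure μ X l fun _ => c := by
  rw [tendstoInMeasure_iff_dist] at *
  intro ε hε
  have hclosed : MeasurableSet {y : E | ε ≤ dist y c} :=
    (isClosed_le continuous_const (continuous_id.dist continuous_const)).measurableSet
  have hlaw : ∀ i, μ {x | ε ≤ dist (X i x) c} = μ {x | ε ≤ dist (Y i x) c} := fun i =>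
    (hXY i).measure_mem_eq hclosed
  simpa only [hlaw] using hY ε hε

theorem BoundedInProbability.smul_tendstoInMeasure_zero [SeminormedAddCommGroup E]
    [NormedSpace ℝ E] {f : ι → α → ℝ} {X : ι → α → E} (hf : BoundedInProbability μ f l)
    (hX : TendstoInMeasure μ X l fun _ => 0) :
    TendstoInMeasure μ (fun i x => f i x • X i x) l fun _ => 0 := by
  rw [tendstoInMeasure_iff_norm] at *
  intro ε hε
  rw [ENNReal.tendsto_nhds_zero]
  intro δ hδ
  obtain ⟨M, hM⟩ := hf (δ / 2) (ENNReal.half_pos hδ.ne')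
  set M' := max M 1
  have hM' : 0 < M' := lt_max_of_lt_right one_pos
  have hsub : ∀ i, {x | ε ≤ ‖f i x • X i x - 0‖} ⊆
      {x | M ≤ |f i x|} ∪ {x | ε / M' ≤ ‖X i x - 0‖} := by
    intro i x hx
    by_contra hcon
    simp only [Set.mem_union, Set.mem_ofPred_eq, not_or, not_le, sub_zero] at hx hcon
    rw [norm_smul, Real.norm_eq_abs] at hx
    have hfM : |f i x| ≤ M' := (hcon.1.le).trans (le_max_left _ _)
    have hprod : |f i x| * ‖X i x‖ < ε := calc
      |f i x| * ‖X i x‖ ≤ M' * ‖X i x‖ := mul_le_mul_of_nonneg_right hfM (norm_nonneg _)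
      _ < M' * (ε / M') := mul_lt_mul_of_pos_left hcon.2 hM'
      _ = ε := mul_div_cancel₀ ε hM'.ne'
    linarith
  filter_upwards [hM, (ENNReal.tendsto_nhds_zero.mp (hX (ε / M') (div_pos hε hM')))
    (δ / 2) (ENNReal.half_pos hδ.ne')] with i hfi hXi
  calc μ {x | ε ≤ ‖f i x • X i x - 0‖}
      ≤ μ {x | M ≤ |f i x|} + μ {x | ε / M' ≤ ‖X i x - 0‖} :=
        (measure_mono (hsub i)).trans (measure_union_le _ _)
    _ ≤ δ / 2 + δ / 2 := add_le_add hfi hXi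
    _ = δ := ENNReal.add_halves δ

theorem boundedInProbability_of_variance_le [IsFiniteMeasure μ] {f : ι → α → ℝ}
    (hf : ∀ i, MemLp (f i) 2 μ) (hmean : ∀ i, μ[f i] = 0) {V : ℝ}
    (hV : ∀ i, variance (f i) μ ≤ V) :
    BoundedInProbability μ f l := by
  intro δ hδ
  have hlim : Tendsto (fun M : ℝ => ENNReal.ofReal (V / M ^ 2)) atTop (𝓝 0) := by
    simpa using ENNReal.tendsto_ofReal
      (tendsto_const_nhds.div_atTop (tendsto_pow_atTop two_ne_zero))
  obtain ⟨M, hMδ, hM⟩ := ((hlim.eventually_lt_const hδ).and (eventually_gt_atTop 0)).exists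
  refine ⟨M, Eventually.of_forall fun i => ?_⟩
  calc μ {x | M ≤ |f i x|} = μ {x | M ≤ |f i x - μ[f i]|} := by simp only [hmean, sub_zero]
    _ ≤ ENNReal.ofReal (variance (f i) μ / M ^ 2) :=
      meas_ge_le_variance_div_sq (hf i) hM
    _ ≤ ENNReal.ofReal (V / M ^ 2) := by gcongr; exact hV i
    _ ≤ δ := hMδ.le

end MeasureTheory

theorem continuous_designVec {P Q : ℕ} (z : EuclideanSpace ℝ (Fin Q)) :
    Continuous fun a : EuclideanSpace ℝ (Fin P) => designVec a z := by
  unfold designVec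
  fun_prop

namespace LagoSetup

variable {Ω : Type} [MeasurableSpace Ω] {Pr : Measure Ω} {J1 J2 P Q : ℕ}
  (S : LagoSetup Ω Pr J1 J2 P Q)

def scoreVec (j : Fin J2) (a : EuclideanSpace ℝ (Fin P)) : EuclideanSpace ℝ (Fin (1 + P + Q)) :=
  deriv S.h ⟪S.βstar, designVec a (S.z2 j)⟫ • designVec a (S.z2 j)

def couplingTerm (n : ℕ) (y : (Fin J2 → EuclideanSpace ℝ (Fin P)) × (Fin J2 × ℕ → ℝ)) :
    EuclideanSpace ℝ (Fin (1 + P + Q)) :=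
  (Real.sqrt n)⁻¹ • ∑ j, ∑ i ∈ Finset.range (S.n2 n j),
    y.2 (j, i) • (S.scoreVec j (y.1 j) - S.scoreVec j (S.a2 j))

def scaledErrorSum (n : ℕ) (j : Fin J2) (ω : Ω) : ℝ :=
  (Real.sqrt n)⁻¹ * ∑ i ∈ Finset.range (S.n2 n j), S.ε2 j i ω

theorem continuous_scoreVec (j : Fin J2) : Continuous (S.scoreVec j) :=
  ((S.h_smooth.continuous_deriv (by norm_num)).comp
    (continuous_const.inner (continuous_designVec _))).smul (continuous_designVec _)

theorem continuous_couplingTerm (n : ℕ) : Continuous (S.couplingTerm n) := by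
  unfold couplingTerm
  have := S.continuous_scoreVec
  fun_prop

theorem identDistrib_interventions_errors (n : ℕ) :
    IdentDistrib (fun ω => ((fun j => S.A2 n j ω), fun p : Fin J2 × ℕ => S.ε2n n p.1 p.2 ω))
      (fun ω => ((fun j => S.A2 n j ω), fun p : Fin J2 × ℕ => S.ε2 p.1 p.2 ω)) Pr Pr := by
  have hmeas : ∀ e : Fin J2 → ℕ → Ω → ℝ, (∀ j i, Measurable (e j i)) →
      Measurable fun ω => ((fun p : Fin J1 × ℕ => S.ε1 p.1 p.2 ω), (fun j => S.A2 n j ω),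
        fun p : Fin J2 × ℕ => e p.1 p.2 ω) := fun e he =>
    (measurable_pi_lambda _ fun p : Fin J1 × ℕ => S.meas_ε1 p.1 p.2).prodMk
      ((measurable_pi_lambda _ fun j => S.measA2 n j).prodMk
        (measurable_pi_lambda _ fun p : Fin J2 × ℕ => he p.1 p.2))
  have hjoint : IdentDistrib _ _ Pr Pr :=
    ⟨(hmeas _ (S.meas_ε2n n)).aemeasurable, (hmeas _ S.meas_ε2).aemeasurable, S.jointLaw n⟩
  exact hjoint.comp measurable_snd

theorem n2_le (n : ℕ) (j : Fin J2) : S.n2 n j ≤ n :=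
  calc S.n2 n j ≤ ∑ j', S.n2 n j' := Finset.single_le_sum (fun _ _ => Nat.zero_le _)
        (Finset.mem_univ j)
    _ ≤ n := (Nat.le_add_left _ _).trans_eq (S.sum_sizes n)

theorem memLp_ε2 [IsFiniteMeasure Pr] (j : Fin J2) (i : ℕ) : MemLp (S.ε2 j i) 2 Pr :=
  MemLp.of_bound (S.meas_ε2 j i).aestronglyMeasurable S.bound
    (ae_of_all _ fun ω => (Real.norm_eq_abs _).trans_le (S.ε2_bdd j i ω))

theorem indepFun_ε2 (j : Fin J2) {i i' : ℕ} (hii' : i ≠ i') :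
    IndepFun (S.ε2 j i) (S.ε2 j i') Pr :=
  S.ε_indep.indepFun (i := Sum.inr (j, i)) (j := Sum.inr (j, i')) (by simp [hii'])

theorem variance_ε2_le [IsProbabilityMeasure Pr] (j : Fin J2) (i : ℕ) :
    variance (S.ε2 j i) Pr ≤ S.bound ^ 2 := by
  have h := variance_le_sq_of_bounded (ae_of_all Pr fun ω => abs_le.mp (S.ε2_bdd j i ω))
    (S.meas_ε2 j i).aemeasurable
  rwa [sub_neg_eq_add, ← two_mul, mul_div_cancel_left₀ _ two_ne_zero] at h

theorem memLp_scaledErrorSum [IsFiniteMeasure Pr] (n : ℕ) (j : Fin J2) :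
    MemLp (S.scaledErrorSum n j) 2 Pr :=
  (memLp_finsetSum _ fun i _ => S.memLp_ε2 j i).const_mul _

theorem integral_scaledErrorSum [IsFiniteMeasure Pr] (n : ℕ) (j : Fin J2) :
    Pr[S.scaledErrorSum n j] = 0 := by
  simp only [scaledErrorSum]
  rw [integral_const_mul, integral_finsetSum _ fun i _ => (S.memLp_ε2 j i).integrable one_le_two]
  simp [S.ε2_mean]

theorem variance_scaledErrorSum_le [IsProbabilityMeasure Pr] (n : ℕ) (j : Fin J2) :
    variance (S.scaledErrorSum n j) Pr ≤ S.bound ^ 2 := by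
  have hsum : variance (∑ i ∈ Finset.range (S.n2 n j), S.ε2 j i) Pr
      = ∑ i ∈ Finset.range (S.n2 n j), variance (S.ε2 j i) Pr :=
    IndepFun.variance_sum (fun i _ => S.memLp_ε2 j i) fun i _ i' _ hii' => S.indepFun_ε2 j hii'
  have hsize : (n : ℝ)⁻¹ * S.n2 n j ≤ 1 := by
    rcases n.eq_zero_or_pos with rfl | hn
    · simp
    · rw [inv_mul_le_one₀ (by exact_mod_cast hn)]
      exact_mod_cast S.n2_le n j
  calc variance (S.scaledErrorSum n j) Pr
      = (n : ℝ)⁻¹ * ∑ i ∈ Finset.range (S.n2 n j), variance (S.ε2 j i) Pr := by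
        rw [← Real.sq_sqrt (Nat.cast_nonneg n), ← inv_pow, ← hsum, ← variance_const_mul]
        congr 1
        ext ω
        simp [scaledErrorSum]
    _ ≤ (n : ℝ)⁻¹ * (S.n2 n j * S.bound ^ 2) := by
        gcongr
        simpa using Finset.sum_le_card_nsmul (Finset.range (S.n2 n j)) _ _
          fun i _ => S.variance_ε2_le j i
    _ ≤ S.bound ^ 2 := by
        rw [← mul_assoc]
        exact mul_le_of_le_one_left (sq_nonneg _) hsize

theorem boundedInProbability_scaledErrorSum [IsProbabilityMeasure Pr] (j : Fin J2) :
    BoundedInProbability Pr (fun n => S.scaledErrorSum n j) atTop :=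
  boundedInProbability_of_variance_le (S.memLp_scaledErrorSum · j)
    (S.integral_scaledErrorSum · j) (S.variance_scaledErrorSum_le · j)

theorem tendstoInMeasure_scoreVec_sub (j : Fin J2) :
    TendstoInMeasure Pr (fun n ω => S.scoreVec j (S.A2 n j ω) - S.scoreVec j (S.a2 j)) atTop
      fun _ => 0 := by
  have hg : Continuous fun a => S.scoreVec j a - S.scoreVec j (S.a2 j) :=
    (S.continuous_scoreVec j).sub continuous_const
  simpa only [sub_self] using (S.A2_tendsto j).comp_continuousAt hg.continuousAt

theorem couplingTerm_coupled_eq (n : ℕ) (ω : Ω) :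
    S.couplingTerm n ((fun j => S.A2 n j ω), fun p => S.ε2 p.1 p.2 ω) =
      ∑ j, S.scaledErrorSum n j ω • (S.scoreVec j (S.A2 n j ω) - S.scoreVec j (S.a2 j)) := by
  simp only [couplingTerm, scaledErrorSum, Finset.smul_sum, Finset.mul_sum, Finset.sum_smul,
    mul_smul]

theorem tendstoInMeasure_couplingTerm_coupled [IsProbabilityMeasure Pr] :
    TendstoInMeasure Pr
      (fun n ω => S.couplingTerm n ((fun j => S.A2 n j ω), fun p => S.ε2 p.1 p.2 ω)) atTop
      fun _ => 0 := by
  simp only [couplingTerm_coupled_eq]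
  simpa using tendstoInMeasure_finsetSum Finset.univ fun j _ =>
    (S.boundedInProbability_scaledErrorSum j).smul_tendstoInMeasure_zero
      (S.tendstoInMeasure_scoreVec_sub j)

end LagoSetup

/-- **Vanishing of the coupling term in the score (U_{2_1,n} → 0):**
(1/√n) Σ_{j≤J₂} Σ_{i≤n_j^{(2)}(n)} [h′(⟨β*, X_j^{(2,n)}⟩) X_j^{(2,n)} − h′(⟨β*, x_j^{(2)}⟩) x_j^{(2)}] ε_{ij}^{(2,n)}
→ 0 in probability. -/
theorem lago_coupling_term_vanishes
    {Ω : Type} [MeasurableSpace Ω] {Pr : Measure Ω} [IsProbabilityMeasure Pr]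
    {J1 J2 P Q : ℕ} (S : LagoSetup Ω Pr J1 J2 P Q) :
    TendstoInMeasure Pr
      (fun (n : ℕ) ω => (Real.sqrt (n : ℝ))⁻¹ •
        ∑ j, ∑ i ∈ Finset.range (S.n2 n j),
          S.ε2n n j i ω •
            ((deriv S.h ⟪S.βstar, S.X2v n j ω⟫) • S.X2v n j ω -
              (deriv S.h ⟪S.βstar, S.x2v j⟫) • S.x2v j))
      atTop (fun _ => (0 : EuclideanSpace ℝ (Fin (1 + P + Q)))) :=
  S.tendstoInMeasure_couplingTerm_coupled.of_identDistrib fun n =>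
    (S.identDistrib_interventions_errors n).comp (S.continuous_couplingTerm n).measurable
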